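/- arXiv:2605.00148 — 5 statements merged into one kernel-verified Lean document; each statement's English description precedes it below -/
import Mathlib

section
/- Let X be a topological space, A a positive bounded linear operator on X →ᵇ ℝ, and U ∈ X →ᵇ ℝ with U ≥ 0. Set S = A − M_U. Then for every t ≥ 0 the operator exp(t S) is positive: for every f ∈ X →ᵇ ℝ with f ≥ 0 one has exp(t S) f ≥ 0. (Lemma 4.1(i), positivity of the perturbed semigroup e^{tS_n} with S_n = Â − U.) -/
open BoundedContinuousFunction

/-- The `TopologicalRing` instance on endomorphisms of `X →ᵇ ℝ`, provided here to help
instance synthesis for the operator exponential. -/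
instance {X : Type*} [TopologicalSpace X] :
    IsTopologicalRing ((X →ᵇ ℝ) →L[ℝ] (X →ᵇ ℝ)) :=
  letI : SeminormedRing ((X →ᵇ ℝ) →L[ℝ] (X →ᵇ ℝ)) := inferInstance
  inferInstance

/-!
Since `U ≤ ‖U‖`, the shifted operator `S + ‖U‖ = A + M_{‖U‖ - U}` is positive. A positive
operator has a positive exponential, because every term of the exponential series is positive
and the positive cone is closed. As the scalar `‖U‖` commutes with `S`,
`exp (t S) = e^{-t‖U‖} exp (t (S + ‖U‖))`.
-/

namespace ContinuousLinearMap

variable {E : Type*} [NormedAddCommGroup E] [NormedSpace ℝ E] [PartialOrder E]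

def PreservesNonneg (T : E →L[ℝ] E) : Prop :=
  ∀ f, 0 ≤ f → 0 ≤ T f

namespace PreservesNonneg

variable {S T : E →L[ℝ] E}

theorem mul (hS : S.PreservesNonneg) (hT : T.PreservesNonneg) : (S * T).PreservesNonneg :=
  fun f hf => hS _ (hT f hf)

theorem pow (hT : T.PreservesNonneg) (n : ℕ) : (T ^ n).PreservesNonneg := by
  induction n with
  | zero => exact fun f hf => hf
  | succ n ih => rw [pow_succ]; exact ih.mul hT

theorem add [IsOrderedAddMonoid E] (hS : S.PreservesNonneg) (hT : T.PreservesNonneg) :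
    (S + T).PreservesNonneg :=
  fun f hf => add_nonneg (hS f hf) (hT f hf)

theorem smul [PosSMulMono ℝ E] (hT : T.PreservesNonneg) {c : ℝ} (hc : 0 ≤ c) :
    (c • T).PreservesNonneg :=
  fun f hf => smul_nonneg hc (hT f hf)

variable [IsOrderedAddMonoid E] [PosSMulMono ℝ E] [OrderClosedTopology E] [CompleteSpace E]

theorem exp (hT : T.PreservesNonneg) : (NormedSpace.exp T).PreservesNonneg := fun f hf =>
  ((NormedSpace.exp_series_hasSum_exp' (𝕂 := ℝ) T).mapL (apply ℝ E f)).nonneg fun n =>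
    smul_nonneg (by positivity) (hT.pow n f hf)

theorem exp_of_add_algebraMap {c : ℝ}
    (hT : (T + algebraMap ℝ (E →L[ℝ] E) c).PreservesNonneg) :
    (NormedSpace.exp T).PreservesNonneg := by
  let : NormedAlgebra ℚ (E →L[ℝ] E) := .restrictScalars ℚ ℝ _
  have hsplit : NormedSpace.exp T =
      NormedSpace.exp (-c) • NormedSpace.exp (T + algebraMap ℝ (E →L[ℝ] E) c) := by
    rw [← smul_one_mul, ← Algebra.algebraMap_eq_smul_one, NormedSpace.algebraMap_exp_comm,
      ← NormedSpace.exp_add_of_commute (Algebra.commutes _ _), map_neg, add_comm T,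
      neg_add_cancel_left]
  rw [hsplit]
  exact hT.exp.smul (by rw [← Real.exp_eq_exp_ℝ]; positivity)

end PreservesNonneg

theorem preservesNonneg_mul_left {R : Type*} [NormedRing R] [NormedAlgebra ℝ R] [PartialOrder R]
    [PosMulMono R] {V : R} (hV : 0 ≤ V) : (mul ℝ R V).PreservesNonneg :=
  fun _ hf => mul_nonneg hV hf

theorem mul_algebraMap {R : Type*} [NormedRing R] [NormedAlgebra ℝ R] (c : ℝ) :
    mul ℝ R (algebraMap ℝ R c) = algebraMap ℝ (R →L[ℝ] R) c := by
  ext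
  simp [Algebra.algebraMap_eq_smul_one]

end ContinuousLinearMap

section BoundedContinuousFunction

variable {X : Type*} [TopologicalSpace X]

instance : PosSMulMono ℝ (X →ᵇ ℝ) :=
  ⟨fun _ hc _ _ hfg x => smul_le_smul_of_nonneg_left (hfg x) hc⟩

instance : PosMulMono (X →ᵇ ℝ) :=
  ⟨fun _ ha _ _ hfg x => mul_le_mul_of_nonneg_left (hfg x) (ha x)⟩

theorem BoundedContinuousFunction.le_algebraMap_norm (U : X →ᵇ ℝ) :
    U ≤ algebraMap ℝ (X →ᵇ ℝ) ‖U‖ := fun x => by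
  simpa using (le_abs_self _).trans (U.norm_coe_le_norm x)

end BoundedContinuousFunction

open ContinuousLinearMap in
theorem exp_perturbed_positive_general
    {X : Type*} [TopologicalSpace X]
    (A : (X →ᵇ ℝ) →L[ℝ] (X →ᵇ ℝ))
    (hA : ∀ f : X →ᵇ ℝ, 0 ≤ f → 0 ≤ A f)
    (U : X →ᵇ ℝ)
    (S : (X →ᵇ ℝ) →L[ℝ] (X →ᵇ ℝ))
    (hS : S = A - ContinuousLinearMap.mul ℝ (X →ᵇ ℝ) U)
    (t : ℝ) (ht : 0 ≤ t)
    (f : X →ᵇ ℝ) (hf : 0 ≤ f) :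
    0 ≤ NormedSpace.exp (t • S) f := by
  have hS_add :
      S + algebraMap ℝ _ ‖U‖ = A + mul ℝ (X →ᵇ ℝ) (algebraMap ℝ (X →ᵇ ℝ) ‖U‖ - U) := by
    rw [hS, map_sub, mul_algebraMap]
    abel
  have hpos : (t • (S + algebraMap ℝ _ ‖U‖)).PreservesNonneg := by
    rw [hS_add]
    exact (PreservesNonneg.add hA
      (preservesNonneg_mul_left (sub_nonneg.2 U.le_algebraMap_norm))).smul ht
  have hscale : t • (S + algebraMap ℝ _ ‖U‖) = t • S + algebraMap ℝ _ (t * ‖U‖) := by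
    rw [smul_add, map_mul, ← Algebra.smul_def]
  exact (hscale ▸ hpos).exp_of_add_algebraMap f hf

/-- Lemma 4.1(i): positivity of the perturbed semigroup `e^{tS}` with `S = A - M_U`. -/
theorem exp_perturbed_positive
    {X : Type*} [TopologicalSpace X]
    (A : (X →ᵇ ℝ) →L[ℝ] (X →ᵇ ℝ))
    (hA : ∀ f : X →ᵇ ℝ, 0 ≤ f → 0 ≤ A f)
    (U : X →ᵇ ℝ) (hU : 0 ≤ U)
    (S : (X →ᵇ ℝ) →L[ℝ] (X →ᵇ ℝ))
    (hS : S = A - ContinuousLinearMap.mul ℝ (X →ᵇ ℝ) U)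
    (t : ℝ) (ht : 0 ≤ t)
    (f : X →ᵇ ℝ) (hf : 0 ≤ f) :
    0 ≤ NormedSpace.exp (t • S) f :=
  exp_perturbed_positive_general A hA U S hS t ht f hf
end

section
/- Let X be a topological space, A a positive bounded linear operator on X →ᵇ ℝ, and U ∈ X →ᵇ ℝ with U ≥ 0. Set S = A − M_U. Then for every t ≥ 0 and every f ∈ X →ᵇ ℝ with f ≥ 0 one has exp(t S) f ≥ exp(−t‖U‖) · (exp(t A) f), where exp(−t‖U‖) is the real scalar exponential. (Inequality (20L) in the proof of Lemma 4.1, obtained via the Trotter formula.) -/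
open BoundedContinuousFunction

/-!
Since `U ≤ ‖U‖` pointwise, `t • S = t • (S + ‖U‖ • 1) - t‖U‖ • 1` where `S + ‖U‖ • 1` dominates
the positive operator `A` on the positive cone. The scalar part factors out of the exponential,
and the exponential series, taken termwise, is monotone on positive operators.
-/

theorem NormedSpace.exp_add_algebraMap {𝔸 : Type*} [NormedRing 𝔸] [NormedAlgebra ℝ 𝔸]
    [CompleteSpace 𝔸] (x : 𝔸) (r : ℝ) :
    exp (x + algebraMap ℝ 𝔸 r) = Real.exp r • exp x := by
  -- `exp` does not depend on the choice of `ℚ`-algebra structure.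
  let := NormedAlgebra.restrictScalars ℚ ℝ 𝔸
  rw [exp_add_of_commute (Algebra.commutes r x).symm, Real.exp_eq_exp_ℝ,
    ← algebraMap_exp_comm (𝕂 := ℝ), ← Algebra.commutes, Algebra.smul_def]

instance BoundedContinuousFunction.instPosSMulMono {X : Type*} [TopologicalSpace X] :
    PosSMulMono ℝ (X →ᵇ ℝ) :=
  ⟨fun _ hr _ _ hfg x => mul_le_mul_of_nonneg_left (hfg x) hr⟩

theorem BoundedContinuousFunction.mul_le_norm_smul {X : Type*} [TopologicalSpace X]
    (U : X →ᵇ ℝ) {g : X →ᵇ ℝ} (hg : 0 ≤ g) : U * g ≤ ‖U‖ • g :=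
  fun x => mul_le_mul_of_nonneg_right (U.apply_le_norm x) (hg x)

namespace ContinuousLinearMap

variable {E : Type*} [NormedAddCommGroup E] [NormedSpace ℝ E] [PartialOrder E] {B C : E →L[ℝ] E}

theorem pow_apply_nonneg (hB : ∀ f, 0 ≤ f → 0 ≤ B f) (n : ℕ) {f : E} (hf : 0 ≤ f) :
    0 ≤ (B ^ n) f := by
  induction n generalizing f with
  | zero => exact hf
  | succ n ih => exact ih (hB f hf)

theorem pow_apply_le_pow_apply [IsOrderedAddMonoid E] (hB : ∀ f, 0 ≤ f → 0 ≤ B f) (hBC : ∀ f, 0 ≤ f → B f ≤ C f)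
    (n : ℕ) {f : E} (hf : 0 ≤ f) : (B ^ n) f ≤ (C ^ n) f := by
  induction n generalizing f with
  | zero => exact le_rfl
  | succ n ih =>
    have hC : ∀ f, 0 ≤ f → 0 ≤ C f := fun f hf => (hB f hf).trans (hBC f hf)
    calc (B ^ (n + 1)) f = (B ^ n) (B f) := rfl
      _ ≤ (C ^ n) (B f) := ih (hB f hf)
      _ ≤ (C ^ n) (C f) := by
        rw [← sub_nonneg, ← map_sub]
        exact pow_apply_nonneg hC n (sub_nonneg.2 (hBC f hf))

theorem exp_apply_le_exp_apply [IsOrderedAddMonoid E] [CompleteSpace E] [OrderClosedTopology E] [PosSMulMono ℝ E]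
    (hB : ∀ f, 0 ≤ f → 0 ≤ B f) (hBC : ∀ f, 0 ≤ f → B f ≤ C f) {f : E} (hf : 0 ≤ f) :
    NormedSpace.exp B f ≤ NormedSpace.exp C f := by
  have hasSum_exp_apply (T : E →L[ℝ] E) :
      HasSum (fun n => (n.factorial⁻¹ : ℝ) • (T ^ n) f) (NormedSpace.exp T f) := by
    simpa using (NormedSpace.exp_series_hasSum_exp' (𝕂 := ℝ) T).mapL (apply ℝ E f)
  refine hasSum_le (fun n => ?_) (hasSum_exp_apply B) (hasSum_exp_apply C)
  exact smul_le_smul_of_nonneg_left (pow_apply_le_pow_apply hB hBC n hf) (by positivity)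

end ContinuousLinearMap

theorem exp_perturbed_lower_bound_general
    {X : Type*} [TopologicalSpace X]
    (A : (X →ᵇ ℝ) →L[ℝ] (X →ᵇ ℝ))
    (hA : ∀ f : X →ᵇ ℝ, 0 ≤ f → 0 ≤ A f)
    (U : X →ᵇ ℝ)
    (S : (X →ᵇ ℝ) →L[ℝ] (X →ᵇ ℝ))
    (hS : S = A - ContinuousLinearMap.mul ℝ (X →ᵇ ℝ) U)
    (t : ℝ) (ht : 0 ≤ t)
    (f : X →ᵇ ℝ) (hf : 0 ≤ f) :
    Real.exp (-t * ‖U‖) • (NormedSpace.exp (t • A) f) ≤ NormedSpace.exp (t • S) f := by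
  set C := S + ‖U‖ • (1 : (X →ᵇ ℝ) →L[ℝ] (X →ᵇ ℝ))
  have hAC : ∀ g, 0 ≤ g → A g ≤ C g := fun g hg => by
    simpa [C, hS, sub_add, sub_nonpos] using U.mul_le_norm_smul hg
  have hfac : NormedSpace.exp (t • S) = Real.exp (-t * ‖U‖) • NormedSpace.exp (t • C) :=
    calc NormedSpace.exp (t • S)
        = NormedSpace.exp (t • C + algebraMap ℝ _ (-t * ‖U‖)) := by
          rw [Algebra.algebraMap_eq_smul_one]
          congr 1
          module
      _ = _ := NormedSpace.exp_add_algebraMap (t • C) (-t * ‖U‖)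
  rw [hfac, _root_.smul_apply]
  refine smul_le_smul_of_nonneg_left ?_ (Real.exp_nonneg _)
  exact ContinuousLinearMap.exp_apply_le_exp_apply (fun g hg => smul_nonneg ht (hA g hg))
    (fun g hg => smul_le_smul_of_nonneg_left (hAC g hg) ht) hf

/-- Inequality (20L): `exp(tS) f ≥ exp(-t‖U‖) • exp(tA) f` for `S = A - M_U`, `f ≥ 0`. -/
theorem exp_perturbed_lower_bound
    {X : Type*} [TopologicalSpace X]
    (A : (X →ᵇ ℝ) →L[ℝ] (X →ᵇ ℝ))
    (hA : ∀ f : X →ᵇ ℝ, 0 ≤ f → 0 ≤ A f)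
    (U : X →ᵇ ℝ) (hU : 0 ≤ U)
    (S : (X →ᵇ ℝ) →L[ℝ] (X →ᵇ ℝ))
    (hS : S = A - ContinuousLinearMap.mul ℝ (X →ᵇ ℝ) U)
    (t : ℝ) (ht : 0 ≤ t)
    (f : X →ᵇ ℝ) (hf : 0 ≤ f) :
    Real.exp (-t * ‖U‖) • (NormedSpace.exp (t • A) f) ≤ NormedSpace.exp (t • S) f :=
  exp_perturbed_lower_bound_general A hA U S hS t ht f hf
end

section
/- Let X be a topological space, A a positive bounded linear operator on X →ᵇ ℝ, and U, W ∈ X →ᵇ ℝ with U ≥ 0 and W ≥ 0. Set S = A − M_U − M_W and L = A − M_U (so L = S + M_W). Then for every t ≥ 0 and every f ∈ X →ᵇ ℝ with f ≥ 0 one has exp(t S) f ≤ exp(t L) f. (Lemma 4.1(ii): domination e^{tS_n} f ≤ e^{t L̂*_n} f of the perturbed semigroup by the unperturbed one.) -/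
/-!
Shifting by `c = ‖U + W‖` makes `S + c = A + (c - U - W)` a positive operator, and
`L + c = (S + c) + W` dominates it on positive functions. For a positive `P` dominated by `Q`,
`Pⁿ f ≤ Qⁿ f` for `f ≥ 0` by induction, so the exponential series compare termwise; the shift
is undone by `exp (t S) = e^{-tc} exp (t (S + c))`, a positive multiple.
-/

open BoundedContinuousFunction

namespace ContinuousLinearMap

variable {R E : Type*} [Semiring R] [TopologicalSpace E]

theorem pow_apply_nonneg_s2 [AddCommMonoid E] [Module R E] [Preorder E] {P : E →L[R] E}
    (hP : ∀ g, 0 ≤ g → 0 ≤ P g) {f : E} (hf : 0 ≤ f) (n : ℕ) : 0 ≤ (P ^ n) f := by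
  induction n with
  | zero => exact hf
  | succ n ih => rw [pow_succ']; exact hP _ ih

theorem pow_apply_le_pow_apply_s2 [AddCommGroup E] [Module R E] [PartialOrder E]
    [IsOrderedAddMonoid E] {P Q : E →L[R] E} (hP : ∀ g, 0 ≤ g → 0 ≤ P g)
    (hPQ : ∀ g, 0 ≤ g → P g ≤ Q g) {f : E} (hf : 0 ≤ f) (n : ℕ) : (P ^ n) f ≤ (Q ^ n) f := by
  induction n with
  | zero => rfl
  | succ n ih =>
    rw [pow_succ', pow_succ']
    calc P ((P ^ n) f) ≤ P ((Q ^ n) f) := by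
          simpa only [map_sub, sub_nonneg] using hP _ (sub_nonneg.mpr ih)
      _ ≤ Q ((Q ^ n) f) :=
          hPQ _ (pow_apply_nonneg_s2 (fun g hg => (hP g hg).trans (hPQ g hg)) hf n)

end ContinuousLinearMap

namespace NormedSpace

theorem exp_add_algebraMap_s2 {𝔸 : Type*} [NormedRing 𝔸] [NormedAlgebra ℝ 𝔸] [CompleteSpace 𝔸]
    (x : 𝔸) (a : ℝ) : exp (x + algebraMap ℝ 𝔸 a) = Real.exp a • exp x := by
  have mem_ball (y : 𝔸) : y ∈ Metric.eball 0 (expSeries ℝ 𝔸).radius :=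
    (expSeries_radius_eq_top ℝ 𝔸).symm ▸ edist_lt_top _ _
  rw [exp_add_of_commute_of_mem_ball (𝕂 := ℝ) (Algebra.commute_algebraMap_right _ _)
    (mem_ball _) (mem_ball _), ← algebraMap_exp_comm, ← Real.exp_eq_exp_ℝ, ← Algebra.commutes,
    Algebra.smul_def]

variable {E : Type*} [NormedAddCommGroup E] [NormedSpace ℝ E] [CompleteSpace E]
  [PartialOrder E] [IsOrderedAddMonoid E] [OrderClosedTopology E] [PosSMulMono ℝ E]

theorem exp_apply_le_exp_apply {P Q : E →L[ℝ] E} (hP : ∀ g, 0 ≤ g → 0 ≤ P g)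
    (hPQ : ∀ g, 0 ≤ g → P g ≤ Q g) {f : E} (hf : 0 ≤ f) : exp P f ≤ exp Q f := by
  have exp_apply (T : E →L[ℝ] E) : exp T f = ∑' n : ℕ, (n.factorial : ℝ)⁻¹ • (T ^ n) f := by
    simp only [exp_eq_tsum ℝ]
    exact (ContinuousLinearMap.apply ℝ E f).map_tsum (expSeries_summable' (𝕂 := ℝ) T)
  have summable (T : E →L[ℝ] E) : Summable fun n : ℕ => (n.factorial : ℝ)⁻¹ • (T ^ n) f := by
    simpa only [map_smul, ContinuousLinearMap.apply_apply] using
      (ContinuousLinearMap.apply ℝ E f).summable (expSeries_summable' (𝕂 := ℝ) T)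
  rw [exp_apply, exp_apply]
  refine (summable P).tsum_le_tsum (fun n => ?_) (summable Q)
  exact smul_le_smul_of_nonneg_left
    (ContinuousLinearMap.pow_apply_le_pow_apply_s2 hP hPQ hf n) (by positivity)

theorem exp_apply_le_exp_apply_of_add_algebraMap {P Q : E →L[ℝ] E} {c : ℝ}
    (hP : ∀ g, 0 ≤ g → 0 ≤ (P + algebraMap ℝ _ c) g)
    (hPQ : ∀ g, 0 ≤ g → P g ≤ Q g) {f : E} (hf : 0 ≤ f) : exp P f ≤ exp Q f := by
  have shift (T : E →L[ℝ] E) : exp T f = Real.exp (-c) • exp (T + algebraMap ℝ _ c) f := by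
    rw [← _root_.smul_apply, ← exp_add_algebraMap_s2, add_assoc, ← map_add, add_neg_cancel,
      map_zero, add_zero]
  rw [shift P, shift Q]
  refine smul_le_smul_of_nonneg_left
    (exp_apply_le_exp_apply hP (fun g hg => ?_) hf) (Real.exp_nonneg _)
  simpa only [_root_.add_apply, ContinuousLinearMap.algebraMap_apply] using
    add_le_add_left (hPQ g hg) _

end NormedSpace

namespace BoundedContinuousFunction

variable {X : Type*} [TopologicalSpace X]

instance : PosSMulMono ℝ (X →ᵇ ℝ) :=
  ⟨fun _ ha _ _ hfg x => smul_le_smul_of_nonneg_left (hfg x) ha⟩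

theorem mul_le_norm_smul_s2 {V g : X →ᵇ ℝ} (hg : 0 ≤ g) : V * g ≤ ‖V‖ • g := fun x =>
  mul_le_mul_of_nonneg_right ((le_abs_self _).trans (V.norm_coe_le_norm x)) (hg x)

theorem sub_mul_add_algebraMap_norm_apply_nonneg {A : (X →ᵇ ℝ) →L[ℝ] (X →ᵇ ℝ)}
    (hA : ∀ f : X →ᵇ ℝ, 0 ≤ f → 0 ≤ A f) (V : X →ᵇ ℝ) {g : X →ᵇ ℝ} (hg : 0 ≤ g) :
    0 ≤ (A - ContinuousLinearMap.mul ℝ (X →ᵇ ℝ) V + algebraMap ℝ _ ‖V‖) g := by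
  simp only [_root_.add_apply, _root_.sub_apply, ContinuousLinearMap.mul_apply',
    ContinuousLinearMap.algebraMap_apply]
  rw [sub_add_eq_add_sub, add_sub_assoc]
  exact add_nonneg (hA g hg) (sub_nonneg.mpr (mul_le_norm_smul_s2 hg))

end BoundedContinuousFunction

theorem exp_perturbed_dominated_general
    {X : Type*} [TopologicalSpace X]
    (A : (X →ᵇ ℝ) →L[ℝ] (X →ᵇ ℝ))
    (hA : ∀ f : X →ᵇ ℝ, 0 ≤ f → 0 ≤ A f)
    (U W : X →ᵇ ℝ) (hW : 0 ≤ W)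
    (S L : (X →ᵇ ℝ) →L[ℝ] (X →ᵇ ℝ))
    (hS : S = A - ContinuousLinearMap.mul ℝ (X →ᵇ ℝ) U - ContinuousLinearMap.mul ℝ (X →ᵇ ℝ) W)
    (hL : L = A - ContinuousLinearMap.mul ℝ (X →ᵇ ℝ) U)
    (t : ℝ) (ht : 0 ≤ t)
    (f : X →ᵇ ℝ) (hf : 0 ≤ f) :
    NormedSpace.exp (t • S) f ≤ NormedSpace.exp (t • L) f := by
  have hS' : S = A - ContinuousLinearMap.mul ℝ (X →ᵇ ℝ) (U + W) := by
    rw [hS, map_add]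
    exact sub_sub (α := (X →ᵇ ℝ) →L[ℝ] (X →ᵇ ℝ)) _ _ _
  refine NormedSpace.exp_apply_le_exp_apply_of_add_algebraMap (c := t * ‖U + W‖)
    (fun g hg => ?_) (fun g hg => ?_) hf
  · have h := smul_nonneg ht (sub_mul_add_algebraMap_norm_apply_nonneg hA (U + W) hg)
    rw [← hS'] at h
    simpa only [_root_.add_apply, _root_.smul_apply, ContinuousLinearMap.algebraMap_apply,
      smul_add, mul_smul] using h
  · refine smul_le_smul_of_nonneg_left ?_ ht
    rw [hS, hL]
    exact sub_le_self _ fun x => mul_nonneg (hW x) (hg x)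

/-- Lemma 4.1(ii): domination `e^{tS} f ≤ e^{tL} f` where `S = A - M_U - M_W` and
`L = A - M_U`, for `f ≥ 0`. -/
theorem exp_perturbed_dominated
    {X : Type*} [TopologicalSpace X]
    (A : (X →ᵇ ℝ) →L[ℝ] (X →ᵇ ℝ))
    (hA : ∀ f : X →ᵇ ℝ, 0 ≤ f → 0 ≤ A f)
    (U W : X →ᵇ ℝ) (hU : 0 ≤ U) (hW : 0 ≤ W)
    (S L : (X →ᵇ ℝ) →L[ℝ] (X →ᵇ ℝ))
    (hS : S = A - ContinuousLinearMap.mul ℝ (X →ᵇ ℝ) U - ContinuousLinearMap.mul ℝ (X →ᵇ ℝ) W)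
    (hL : L = A - ContinuousLinearMap.mul ℝ (X →ᵇ ℝ) U)
    (t : ℝ) (ht : 0 ≤ t)
    (f : X →ᵇ ℝ) (hf : 0 ≤ f) :
    NormedSpace.exp (t • S) f ≤ NormedSpace.exp (t • L) f :=
  exp_perturbed_dominated_general A hA U W hW S L hS hL t ht f hf
end

section
/- Let E be a real Banach space, S a bounded linear operator on E, and f ∈ E such that the map s ↦ exp(sS) f is Bochner integrable on [0, ∞). Then for every t ≥ 0, exp(tS) (∫₀^∞ exp(sS) f ds) = ∫ₜ^∞ exp(rS) f dr, and consequently ‖exp(tS) (∫₀^∞ exp(sS) f ds)‖ → 0 as t → ∞. (The identity and convergence (45): e^{tSₙ} v⁽ⁿ⁾ = ∫ₜ^∞ e^{rSₙ} f⁽ⁿ⁾_ρ dr → 0.) -/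
/-!
The semigroup law `exp (t • S) ∘ exp (s • S) = exp ((s + t) • S)` moves `exp (t • S)` inside the
integral, and the substitution `r = s + t` turns `∫₀^∞ exp ((s + t) • S) f ds` into the tail
`∫ₜ^∞ exp (r • S) f dr`. Tails of an integrable function tend to `0` by dominated convergence,
since the sets `[t, ∞)` decrease to the empty set.
-/

open MeasureTheory Filter Topology Set

theorem NormedSpace.exp_add_smul {𝔸 : Type*} [NormedRing 𝔸] [NormedAlgebra ℝ 𝔸] [CompleteSpace 𝔸]
    (a : 𝔸) (s t : ℝ) :
    NormedSpace.exp ((s + t) • a) = NormedSpace.exp (s • a) * NormedSpace.exp (t • a) := by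
  -- `exp_add_of_commute` is stated for `ℚ`-algebras.
  let := NormedAlgebra.restrictScalars ℚ ℝ 𝔸
  rw [add_smul, NormedSpace.exp_add_of_commute ((Commute.refl a).smul_left s |>.smul_right t)]

theorem setIntegral_Ici_comp_add_right {E : Type*} [NormedAddCommGroup E] [NormedSpace ℝ E]
    (g : ℝ → E) (a t : ℝ) : ∫ s in Ici a, g (s + t) = ∫ r in Ici (a + t), g r := by
  have := (measurePreserving_add_right volume t).setIntegral_preimage_emb
    (Homeomorph.addRight t).measurableEmbedding g (Ici (a + t))
  simpa using this

theorem tendsto_setIntegral_Ici_atTop_zero {E : Type*} [NormedAddCommGroup E] [NormedSpace ℝ E]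
    {μ : Measure ℝ} {g : ℝ → E} {a : ℝ} (hg : IntegrableOn g (Ici a) μ) :
    Tendsto (fun t => ∫ r in Ici t, g r ∂μ) atTop (𝓝 0) := by
  have hempty : ⋂ t : ℝ, Ici t = ∅ :=
    eq_empty_of_forall_notMem fun x hx => absurd (mem_iInter.1 hx (x + 1)) (by simp)
  simpa [hempty] using tendsto_setIntegral_of_antitone (fun _ => measurableSet_Ici)
    (fun _ _ h => Ici_subset_Ici.2 h) ⟨a, hg⟩

theorem exp_smul_apply_exp_smul {E : Type*} [NormedAddCommGroup E] [NormedSpace ℝ E]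
    [CompleteSpace E] (S : E →L[ℝ] E) (s t : ℝ) (x : E) :
    NormedSpace.exp (t • S) (NormedSpace.exp (s • S) x) = NormedSpace.exp ((s + t) • S) x := by
  rw [add_comm, NormedSpace.exp_add_smul S t s]
  rfl

/-- The identity and convergence (45): `e^{tS} ∫₀^∞ e^{sS} f ds = ∫ₜ^∞ e^{rS} f dr`, whose
norm tends to `0` as `t → ∞`. -/
theorem exp_integral_shift_tendsto_zero
    {E : Type*} [NormedAddCommGroup E] [NormedSpace ℝ E] [CompleteSpace E]
    (S : E →L[ℝ] E) (f : E)
    (hInt : IntegrableOn (fun s : ℝ => NormedSpace.exp (s • S) f) (Set.Ici 0)) :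
    (∀ t : ℝ, 0 ≤ t →
      NormedSpace.exp (t • S) (∫ s in Set.Ici (0 : ℝ), NormedSpace.exp (s • S) f) =
        ∫ r in Set.Ici t, NormedSpace.exp (r • S) f) ∧
    Filter.Tendsto
      (fun t : ℝ =>
        ‖NormedSpace.exp (t • S) (∫ s in Set.Ici (0 : ℝ), NormedSpace.exp (s • S) f)‖)
      Filter.atTop (nhds 0) := by
  have shift : ∀ t : ℝ,
      NormedSpace.exp (t • S) (∫ s in Set.Ici (0 : ℝ), NormedSpace.exp (s • S) f) =
        ∫ r in Set.Ici t, NormedSpace.exp (r • S) f := fun t => by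
    rw [← (NormedSpace.exp (t • S)).integral_comp_comm hInt]
    simp_rw [exp_smul_apply_exp_smul]
    simpa using setIntegral_Ici_comp_add_right (fun r => NormedSpace.exp (r • S) f) 0 t
  refine ⟨fun t _ => shift t, ?_⟩
  simp_rw [shift]
  simpa using (tendsto_setIntegral_Ici_atTop_zero hInt).norm
end

section
/- Let H > 0 and ρ > 0, and let K : ℕ → ℝ satisfy K(0) = 0 and K(n) ≤ n² H K(n−1) + ρⁿ for all n ≥ 1. Then for all n ≥ 1, K(n) ≤ D Hⁿ (n!)², where D = Σ_{m=1}^∞ (ρ/H)^m / (m!)². (The recurrence argument (43)–(44) establishing the bound k⁽ⁿ⁾_ρ(x₁,…,xₙ) ≤ D Hⁿ (n!)² of Theorem 3.1(i).) -/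
/-!
Since `ρⁿ = Hⁿ (n!)² · (ρ/H)ⁿ / (n!)²`, induction on the recurrence bounds `K n` by
`Hⁿ (n!)²` times the `n`-th partial sum of the series defining `D`. The terms are positive,
so each partial sum is at most `D`.
-/

open Finset Nat

lemma summable_pow_div_factorial_sq (x : ℝ) :
    Summable fun m : ℕ => x ^ m / (m ! : ℝ) ^ 2 := by
  refine .of_norm_bounded (Real.summable_pow_div_factorial |x|) fun m => ?_
  have hfac : (1 : ℝ) ≤ m ! := mod_cast m.factorial_pos
  rw [norm_div, norm_pow, Real.norm_eq_abs, norm_pow, Real.norm_natCast]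
  gcongr
  nlinarith

lemma le_sum_mul_pow_mul_factorial_sq {H ρ : ℝ} {K : ℕ → ℝ} (hH : 0 < H) (hK0 : K 0 = 0)
    (hKrec : ∀ n : ℕ, K (n + 1) ≤ ((n : ℝ) + 1) ^ 2 * H * K n + ρ ^ (n + 1)) (n : ℕ) :
    K n ≤ (∑ m ∈ range n, (ρ / H) ^ (m + 1) / ((m + 1) ! : ℝ) ^ 2) * H ^ n * (n ! : ℝ) ^ 2 := by
  induction n with
  | zero => simp [hK0]
  | succ n ih =>
    calc K (n + 1) ≤ ((n : ℝ) + 1) ^ 2 * H * K n + ρ ^ (n + 1) := hKrec n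
      _ ≤ ((n : ℝ) + 1) ^ 2 * H *
            ((∑ m ∈ range n, (ρ / H) ^ (m + 1) / ((m + 1) ! : ℝ) ^ 2) * H ^ n * (n ! : ℝ) ^ 2)
            + ρ ^ (n + 1) := by gcongr
      _ = _ := by
        rw [sum_range_succ, factorial_succ, div_pow]
        push_cast
        field_simp
        ring

/-- The recurrence argument (43)–(44): if `K 0 = 0` and
`K n ≤ n² H K (n-1) + ρⁿ` for `n ≥ 1`, then `K n ≤ D Hⁿ (n!)²` for all `n ≥ 1`,
where `D = Σ_{m=1}^∞ (ρ/H)^m / (m!)²`. -/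
theorem recurrence_bound
    (H ρ : ℝ) (hH : 0 < H) (hρ : 0 < ρ)
    (K : ℕ → ℝ) (hK0 : K 0 = 0)
    (hKrec : ∀ n : ℕ, 1 ≤ n → K n ≤ (n : ℝ) ^ 2 * H * K (n - 1) + ρ ^ n) :
    ∀ n : ℕ, 1 ≤ n →
      K n ≤ (∑' m : ℕ, (ρ / H) ^ (m + 1) / ((m + 1).factorial : ℝ) ^ 2) *
        H ^ n * ((n.factorial : ℝ)) ^ 2 := by
  intro n _
  have hrec (m : ℕ) : K (m + 1) ≤ ((m : ℝ) + 1) ^ 2 * H * K m + ρ ^ (m + 1) := by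
    simpa using hKrec (m + 1) m.succ_pos
  have hsummable := (summable_nat_add_iff 1).mpr (summable_pow_div_factorial_sq (ρ / H))
  calc K n ≤ _ := le_sum_mul_pow_mul_factorial_sq hH hK0 hrec n
    _ ≤ _ := by
      gcongr
      exact hsummable.sum_le_tsum _ fun m _ => by positivity
end
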